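/- arXiv:1805.10843 — 3 statements merged into one kernel-verified Lean document; each statement's English description precedes it below -/
import Mathlib

section
/- For every μ ∈ (0,1) and every σ² > 0, the mean of the simplex distribution equals μ: ∫₀¹ y · p(y;μ,σ²) dy = μ. -/
open Real MeasureTheory

/-- The unit deviance of the simplex distribution. -/
noncomputable def simplexDev (y μ : ℝ) : ℝ :=
  (y - μ)^2 / (y * (1 - y) * μ^2 * (1 - μ)^2)

/-- The simplex density. -/
noncomputable def simplexPdf (y μ σ2 : ℝ) : ℝ :=
  (2 * Real.pi * σ2 * (y * (1 - y))^3) ^ (-(1/2) : ℝ) *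
    Real.exp (-(simplexDev y μ) / (2 * σ2))

/-!
Substitute `u = r(y) = (y - μ) / (μ(1 - μ)√(y(1 - y)))`. The residual `r` increases from `-∞`
to `∞` on `(0, 1)` and `r² = d(y; μ)`, so `y p(y; μ, σ²) dy` becomes
`μ (1 + u / √(u² + 4 / (μ(1 - μ)))) φ_σ²(u) du`, with `φ_σ²` the centred Gaussian density of
variance `σ²`. The second summand is odd in `u` and integrates to zero.
-/

open Set ProbabilityTheory

theorem Function.Odd.integral_eq_zero {G E : Type*} [MeasurableSpace G] [AddGroup G]
    [MeasurableNeg G] [NormedAddCommGroup E] [NormedSpace ℝ E] {f : G → E} (hf : f.Odd)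
    (ν : Measure G) [ν.IsNegInvariant] : ∫ x, f x ∂ν = 0 := by
  have h := integral_neg_eq_self f ν
  simp only [hf _, integral_neg] at h
  have h2 : (2 : ℝ) • ∫ x, f x ∂ν = 0 := by
    rw [two_smul]
    nth_rewrite 1 [← h]
    exact neg_add_cancel _
  exact (smul_eq_zero.mp h2).resolve_left two_ne_zero

noncomputable def simplexResidual (y μ : ℝ) : ℝ :=
  (y - μ) / (μ * (1 - μ) * √(y * (1 - y)))

theorem simplexResidual_sq {y : ℝ} (hy : y ∈ Icc 0 1) (μ : ℝ) :
    simplexResidual y μ ^ 2 = simplexDev y μ := by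
  rw [simplexResidual, simplexDev, div_pow, mul_pow, sq_sqrt (by nlinarith [hy.1, hy.2])]
  ring

theorem hasDerivAt_simplexResidual {y μ : ℝ} (hμ : μ ∈ Ioo 0 1) (hy : y ∈ Ioo 0 1) :
    HasDerivAt (simplexResidual · μ)
      ((y * (1 - 2 * μ) + μ) / (2 * (μ * (1 - μ)) * √(y * (1 - y)) ^ 3)) y := by
  obtain ⟨hμ0, hμ1⟩ := hμ
  obtain ⟨hy0, hy1⟩ := hy
  have hw : 0 < y * (1 - y) := by nlinarith
  have hs : 0 < √(y * (1 - y)) := sqrt_pos.2 hw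
  have hss : √(y * (1 - y)) ^ 2 = y * (1 - y) := sq_sqrt hw.le
  have hsqrt : HasDerivAt (fun t => √(t * (1 - t))) ((1 - 2 * y) / (2 * √(y * (1 - y)))) y := by
    have hq : HasDerivAt (fun t => t * (1 - t)) (1 - 2 * y) y :=
      ((hasDerivAt_id' y).mul ((hasDerivAt_id' y).const_sub 1)).congr_deriv (by ring)
    exact hq.sqrt hw.ne'
  have hμ1' : (1 : ℝ) - μ ≠ 0 := by linarith
  refine (((hasDerivAt_id' y).sub_const μ).div (hsqrt.const_mul (μ * (1 - μ)))
    (by positivity)).congr_deriv ?_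
  field_simp
  linear_combination 2 * hss

theorem strictMonoOn_simplexResidual {μ : ℝ} (hμ : μ ∈ Ioo 0 1) :
    StrictMonoOn (simplexResidual · μ) (Ioo 0 1) := by
  refine strictMonoOn_of_deriv_pos (convex_Ioo 0 1)
    (fun y hy => (hasDerivAt_simplexResidual hμ hy).continuousAt.continuousWithinAt)
    fun y hy => ?_
  rw [interior_Ioo] at hy
  rw [(hasDerivAt_simplexResidual hμ hy).deriv]
  obtain ⟨hμ0, hμ1⟩ := hμ
  obtain ⟨hy0, hy1⟩ := hy
  have hD : 0 < y * (1 - 2 * μ) + μ := by nlinarith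
  have hs : 0 < √(y * (1 - y)) := sqrt_pos.2 (by nlinarith)
  have ha : 0 < μ * (1 - μ) := by nlinarith
  positivity

theorem simplexResidual_image_Ioo {μ : ℝ} (hμ : μ ∈ Ioo 0 1) :
    (simplexResidual · μ) '' Ioo 0 1 = univ := by
  obtain ⟨hμ0, hμ1⟩ := hμ
  refine eq_univ_of_forall fun u => ?_
  set f : ℝ → ℝ := fun y => y - μ - u * (μ * (1 - μ)) * √(y * (1 - y))
  have hfc : ContinuousOn f (Icc 0 1) := by fun_prop
  obtain ⟨y, ⟨hy0, hy1⟩, hfy⟩ :=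
    intermediate_value_Icc zero_le_one hfc
      (show (0 : ℝ) ∈ Icc (f 0) (f 1) from ⟨by simp [f]; linarith, by simp [f]; linarith⟩)
  have hy0' : y ≠ 0 := by rintro rfl; simp [f] at hfy; linarith
  have hy1' : y ≠ 1 := by rintro rfl; simp [f] at hfy; linarith
  have hs : 0 < √(y * (1 - y)) :=
    sqrt_pos.2 (mul_pos (lt_of_le_of_ne hy0 hy0'.symm) (sub_pos.2 (lt_of_le_of_ne hy1 hy1')))
  refine ⟨y, ⟨lt_of_le_of_ne hy0 hy0'.symm, lt_of_le_of_ne hy1 hy1'⟩, ?_⟩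
  have ha : 0 < μ * (1 - μ) := by nlinarith
  show simplexResidual y μ = u
  rw [simplexResidual, div_eq_iff (by positivity)]
  linear_combination hfy

theorem simplexResidual_div_sqrt {y μ : ℝ} (hμ : μ ∈ Ioo 0 1) (hy : y ∈ Ioo 0 1) :
    simplexResidual y μ / √(simplexResidual y μ ^ 2 + 4 / (μ * (1 - μ))) =
      (y - μ) / (y * (1 - 2 * μ) + μ) := by
  obtain ⟨hμ0, hμ1⟩ := hμ
  obtain ⟨hy0, hy1⟩ := hy
  have ha : 0 < μ * (1 - μ) := by nlinarith
  have hD : 0 < y * (1 - 2 * μ) + μ := by nlinarith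
  have hs : 0 < √(y * (1 - y)) := sqrt_pos.2 (by nlinarith)
  have hss : √(y * (1 - y)) ^ 2 = y * (1 - y) := sq_sqrt (by nlinarith)
  -- `(y(1 - 2μ) + μ)² = (y - μ)² + 4μ(1 - μ)y(1 - y)`
  have hsqrt : √(simplexResidual y μ ^ 2 + 4 / (μ * (1 - μ))) =
      (y * (1 - 2 * μ) + μ) / (μ * (1 - μ) * √(y * (1 - y))) := by
    rw [← sqrt_sq (by positivity : 0 ≤ (y * (1 - 2 * μ) + μ) / (μ * (1 - μ) * √(y * (1 - y))))]
    congr 1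
    rw [simplexResidual, div_pow, div_pow, mul_pow, hss]
    field_simp
    ring
  rw [hsqrt, simplexResidual]
  field_simp

theorem integral_gaussianPDFReal_mul_one_add_div_sqrt {v : NNReal} (hv : v ≠ 0) {c : ℝ}
    (hc : 0 ≤ c) (m : ℝ) :
    ∫ u, gaussianPDFReal 0 v u * (m * (1 + u / √(u ^ 2 + c))) = m := by
  have hodd : Function.Odd fun u => gaussianPDFReal 0 v u * (u / √(u ^ 2 + c)) := fun u => by
    simp only [gaussianPDFReal, sub_zero, neg_sq, neg_div, mul_neg]
  have hbdd : ∀ u : ℝ, ‖u / √(u ^ 2 + c)‖ ≤ 1 := fun u => by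
    rw [norm_div, Real.norm_eq_abs, Real.norm_eq_abs, abs_of_nonneg (sqrt_nonneg _)]
    exact div_le_one_of_le₀ (abs_le_sqrt (by linarith)) (sqrt_nonneg _)
  have hint : Integrable fun u => gaussianPDFReal 0 v u * (u / √(u ^ 2 + c)) :=
    (integrable_gaussianPDFReal 0 v).mul_bdd
      (by fun_prop : Measurable fun u : ℝ => u / √(u ^ 2 + c)).aestronglyMeasurable
      (ae_of_all _ hbdd)
  calc ∫ u, gaussianPDFReal 0 v u * (m * (1 + u / √(u ^ 2 + c)))
      = ∫ u, (m * gaussianPDFReal 0 v u + m * (gaussianPDFReal 0 v u * (u / √(u ^ 2 + c)))) := by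
        congr with u
        ring
    _ = m * (∫ u, gaussianPDFReal 0 v u) +
          m * ∫ u, gaussianPDFReal 0 v u * (u / √(u ^ 2 + c)) := by
        rw [integral_add ((integrable_gaussianPDFReal 0 v).const_mul m) (hint.const_mul m),
          integral_const_mul, integral_const_mul]
    _ = m := by
        rw [integral_gaussianPDFReal_eq_one 0 hv, hodd.integral_eq_zero]
        ring

theorem mul_simplexPdf_eq {y μ σ2 : ℝ} (hμ : μ ∈ Ioo 0 1) (hσ2 : 0 < σ2) (hy : y ∈ Ioo 0 1) :
    y * simplexPdf y μ σ2 = |deriv (simplexResidual · μ) y| *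
      (gaussianPDFReal 0 σ2.toNNReal (simplexResidual y μ) *
        (μ * (1 + simplexResidual y μ / √(simplexResidual y μ ^ 2 + 4 / (μ * (1 - μ)))))) := by
  rw [(hasDerivAt_simplexResidual hμ hy).deriv, simplexResidual_div_sqrt hμ hy, gaussianPDFReal,
    sub_zero, simplexResidual_sq (Ioo_subset_Icc_self hy), coe_toNNReal _ hσ2.le, simplexPdf]
  obtain ⟨hμ0, hμ1⟩ := hμ
  obtain ⟨hy0, hy1⟩ := hy
  have ha : 0 < μ * (1 - μ) := by nlinarith
  have hD : 0 < y * (1 - 2 * μ) + μ := by nlinarith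
  have hs : 0 < √(y * (1 - y)) := sqrt_pos.2 (by nlinarith)
  have hss : √(y * (1 - y)) ^ 2 = y * (1 - y) := sq_sqrt (by nlinarith)
  have hnorm : (2 * π * σ2 * (y * (1 - y)) ^ 3) ^ (-(1 / 2) : ℝ) =
      (√(2 * π * σ2))⁻¹ * (√(y * (1 - y)) ^ 3)⁻¹ := by
    have hcube : (y * (1 - y)) ^ 3 = (√(y * (1 - y)) ^ 3) ^ 2 := by
      rw [← pow_mul, mul_comm 3 2, pow_mul, hss]
    rw [rpow_neg (by positivity), ← sqrt_eq_rpow, ← mul_inv, hcube, sqrt_mul (by positivity),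
      sqrt_sq (by positivity)]
  rw [hnorm, abs_of_pos (by positivity)]
  field_simp
  ring

/-- The mean of the simplex distribution equals μ. -/
theorem simplexPdf_mean_eq (μ σ2 : ℝ) (hμ : μ ∈ Set.Ioo (0:ℝ) 1)
    (hσ2 : 0 < σ2) :
    ∫ y in (0:ℝ)..1, y * simplexPdf y μ σ2 = μ := by
  have hderiv (y : ℝ) (hy : y ∈ Ioo 0 1) :
      HasDerivWithinAt (simplexResidual · μ) (deriv (simplexResidual · μ) y) (Ioo 0 1) y :=
    (hasDerivAt_simplexResidual hμ hy).differentiableAt.hasDerivAt.hasDerivWithinAt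
  have hc : 0 ≤ 4 / (μ * (1 - μ)) := div_nonneg zero_le_four (by nlinarith [hμ.1, hμ.2])
  rw [intervalIntegral.integral_of_le zero_le_one, integral_Ioc_eq_integral_Ioo,
    setIntegral_congr_fun measurableSet_Ioo fun y hy => mul_simplexPdf_eq hμ hσ2 hy]
  simp_rw [← smul_eq_mul (a := |deriv (simplexResidual · μ) _|)]
  rw [← integral_image_eq_integral_abs_deriv_smul measurableSet_Ioo hderiv
    (strictMonoOn_simplexResidual hμ).injOn
    fun u => gaussianPDFReal 0 σ2.toNNReal u * (μ * (1 + u / √(u ^ 2 + 4 / (μ * (1 - μ))))),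
    simplexResidual_image_Ioo hμ, setIntegral_univ]
  exact integral_gaussianPDFReal_mul_one_add_div_sqrt (by simpa using hσ2) hc μ
end

section
/- For every μ ∈ (0,1) and every σ² > 0, the expected unit deviance under the simplex distribution equals the dispersion parameter: ∫₀¹ d(y;μ) · p(y;μ,σ²) dy = σ². (Equivalently, the score with respect to σ², namely a(y;μ,σ²) = d(y;μ)/(2(σ²)²) − 1/(2σ²), has zero expectation.) -/
/-!
Write `s = √(y(1-y))`, `u = (y - μ)/(μ(1-μ)s)` and `w = (y + μ - 2μy)/(μ(1-μ)s)`. Then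
`d(y;μ) = u²`, `p(y;μ,σ²) = φ(u)/s³` with `φ` the centred normal density of variance
`σ²`, `w² = u² + 4/(μ(1-μ))`, hence `φ(w) = e^{-2/(μ(1-μ)σ²)} φ(u)`, and
`u' - (1-2μ)w' = 1/s³`. Consequently
`d p = u² φ(u) u' - (1-2μ) e^{2/(μ(1-μ)σ²)} (w² - 4/(μ(1-μ))) φ(w) w'`
is the derivative of an explicit primitive. As `y` runs over `(0,1)`, `u` increases from
`-∞` to `+∞`, while `w` starts and ends at `+∞`: the second term integrates to `0` and the
first to the second moment `σ²` of `φ`.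
-/

open Real MeasureTheory

open Set Filter Topology ProbabilityTheory
open scoped NNReal

@[fun_prop]
theorem continuous_gaussianPDFReal (m : ℝ) (v : ℝ≥0) : Continuous (gaussianPDFReal m v) := by
  unfold gaussianPDFReal
  fun_prop

theorem gaussianPDFReal_zero_eq_of_sq_eq (v : ℝ≥0) {u w k : ℝ} (h : w ^ 2 = u ^ 2 + k) :
    gaussianPDFReal 0 v w = exp (-(k / (2 * v))) * gaussianPDFReal 0 v u := by
  simp only [gaussianPDFReal, sub_zero, h]
  rw [mul_left_comm, ← exp_add]
  ring_nf

theorem integrable_sq_mul_gaussianPDFReal (v : ℝ≥0) :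
    Integrable fun t => t ^ 2 * gaussianPDFReal 0 v t := by
  rcases eq_or_ne v 0 with rfl | hv
  · simp
  have hb : (0 : ℝ) < (2 * (v : ℝ))⁻¹ := by positivity
  refine ((integrable_rpow_mul_exp_neg_mul_sq hb (s := 2) (by norm_num)).const_mul
    (√(2 * π * v))⁻¹).congr (ae_of_all _ fun t => ?_)
  simp only [gaussianPDFReal, sub_zero, rpow_two]
  ring_nf

theorem integrable_sq_sub_mul_gaussianPDFReal (v : ℝ≥0) (k : ℝ) :
    Integrable fun t => (t ^ 2 - k) * gaussianPDFReal 0 v t := by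
  simp_rw [sub_mul]
  exact (integrable_sq_mul_gaussianPDFReal v).sub ((integrable_gaussianPDFReal 0 v).const_mul k)

theorem integral_sq_mul_gaussianPDFReal {v : ℝ≥0} (hv : v ≠ 0) :
    ∫ t, t ^ 2 * gaussianPDFReal 0 v t = v := by
  calc ∫ t, t ^ 2 * gaussianPDFReal 0 v t = ∫ t, t ^ 2 ∂gaussianReal 0 v := by
        simp_rw [integral_gaussianReal_eq_integral_smul hv, smul_eq_mul, mul_comm]
    _ = Var[id; gaussianReal 0 v] := by
        simp [variance_eq_integral measurable_id.aemeasurable, integral_id_gaussianReal]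
    _ = v := variance_id_gaussianReal

theorem integral_eq_sub_of_hasDerivAt_of_tendsto_of_nonneg {f f' : ℝ → ℝ} {a b fa fb : ℝ}
    (hab : a < b) (hderiv : ∀ x ∈ Ioo a b, HasDerivAt f (f' x) x)
    (hf' : ∀ x ∈ Ioo a b, 0 ≤ f' x) (ha : Tendsto f (𝓝[>] a) (𝓝 fa))
    (hb : Tendsto f (𝓝[<] b) (𝓝 fb)) :
    ∫ x in a..b, f' x = fb - fa := by
  have hf : ContinuousOn f (Ioo a b) := fun x hx =>
    (hderiv x hx).continuousAt.continuousWithinAt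
  have hext : ∀ x ∈ Ioo a b, HasDerivAt (extendFrom (Ioo a b) f) (f' x) x := fun x hx =>
    (hderiv x hx).congr_of_eventuallyEq <| eventually_of_mem (isOpen_Ioo.mem_nhds hx)
      (extendFrom_extends hf)
  refine intervalIntegral.integral_eq_sub_of_hasDerivAt_of_tendsto hab hderiv ?_ ha hb
  refine intervalIntegral.intervalIntegrable_deriv_of_nonneg
    (g := extendFrom (Ioo a b) f) ?_ ?_ ?_
  · rw [uIcc_of_le hab.le]
    exact continuousOn_Icc_extendFrom_Ioo hf ha hb
  · simpa only [min_eq_left hab.le, max_eq_right hab.le] using hext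
  · simpa only [min_eq_left hab.le, max_eq_right hab.le] using hf'

theorem tendsto_sqrt_mul_one_sub_nhdsGT_zero {l : Filter ℝ} {y₀ : ℝ}
    (hl : l ≤ 𝓝[Ioo 0 1] y₀) (hy₀ : y₀ * (1 - y₀) = 0) :
    Tendsto (fun y => √(y * (1 - y))) l (𝓝[>] 0) := by
  refine tendsto_nhdsWithin_of_tendsto_nhds_of_eventually_within _ ?_ ?_
  · have h : Tendsto (fun y : ℝ => √(y * (1 - y))) (𝓝 y₀) (𝓝 0) := by
      simpa [hy₀] using (by fun_prop : Continuous fun y : ℝ => √(y * (1 - y))).tendsto y₀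
    exact h.mono_left (hl.trans nhdsWithin_le_nhds)
  · filter_upwards [hl self_mem_nhdsWithin] with y hy
    exact sqrt_pos.2 (mul_pos hy.1 (sub_pos.2 hy.2))

theorem tendsto_div_sqrt_mul_one_sub_atTop {l : Filter ℝ} {y₀ : ℝ} {N : ℝ → ℝ}
    (hl : l ≤ 𝓝[Ioo 0 1] y₀) (hy₀ : y₀ * (1 - y₀) = 0) (hN : Continuous N)
    (hN₀ : 0 < N y₀) :
    Tendsto (fun y => N y / √(y * (1 - y))) l atTop := by
  simp only [div_eq_mul_inv]
  exact ((hN.tendsto y₀).mono_left (hl.trans nhdsWithin_le_nhds)).pos_mul_atTop hN₀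
    (tendsto_sqrt_mul_one_sub_nhdsGT_zero hl hy₀).inv_tendsto_nhdsGT_zero

theorem tendsto_div_sqrt_mul_one_sub_atBot {l : Filter ℝ} {y₀ : ℝ} {N : ℝ → ℝ}
    (hl : l ≤ 𝓝[Ioo 0 1] y₀) (hy₀ : y₀ * (1 - y₀) = 0) (hN : Continuous N)
    (hN₀ : N y₀ < 0) :
    Tendsto (fun y => N y / √(y * (1 - y))) l atBot := by
  simp only [div_eq_mul_inv]
  exact ((hN.tendsto y₀).mono_left (hl.trans nhdsWithin_le_nhds)).neg_mul_atTop hN₀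
    (tendsto_sqrt_mul_one_sub_nhdsGT_zero hl hy₀).inv_tendsto_nhdsGT_zero

theorem hasDerivAt_div_sqrt_mul_one_sub {N : ℝ → ℝ} {n y : ℝ} (hy : y ∈ Ioo 0 1)
    (hN : HasDerivAt N n y) :
    HasDerivAt (fun y => N y / √(y * (1 - y)))
      ((2 * n * (y * (1 - y)) - N y * (1 - 2 * y)) / (2 * √(y * (1 - y)) ^ 3)) y := by
  have hpos : 0 < y * (1 - y) := mul_pos hy.1 (sub_pos.2 hy.2)
  have hs : 0 < √(y * (1 - y)) := sqrt_pos.2 hpos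
  have hpoly : HasDerivAt (fun y => y * (1 - y)) (1 - 2 * y) y :=
    ((hasDerivAt_id' y).fun_mul ((hasDerivAt_id' y).const_sub 1)).congr_deriv (by ring)
  refine (hN.div (hpoly.sqrt hpos.ne') hs.ne').congr_deriv ?_
  have hsq := sq_sqrt hpos.le
  field_simp
  rw [hsq]
  ring

section simplex

variable {μ y : ℝ}

noncomputable def simplexResid (μ y : ℝ) : ℝ := (y - μ) / (μ * (1 - μ)) / √(y * (1 - y))

noncomputable def simplexResidConj (μ y : ℝ) : ℝ :=
  (y + μ - 2 * μ * y) / (μ * (1 - μ)) / √(y * (1 - y))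

theorem sq_simplexResid (hy : 0 ≤ y * (1 - y)) : simplexResid μ y ^ 2 = simplexDev y μ := by
  rw [simplexResid, simplexDev, div_pow, div_pow, sq_sqrt hy, div_div]
  congr 1
  ring

theorem sq_simplexResidConj (hμ : μ ∈ Ioo 0 1) (hy : y ∈ Ioo 0 1) :
    simplexResidConj μ y ^ 2 = simplexResid μ y ^ 2 + 4 / (μ * (1 - μ)) := by
  have := hμ.1.ne'
  have := (sub_pos.2 hμ.2).ne'
  have := hy.1.ne'
  have := (sub_pos.2 hy.2).ne'
  rw [simplexResidConj, simplexResid, div_pow, div_pow, div_pow, div_pow,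
    sq_sqrt (mul_pos hy.1 (sub_pos.2 hy.2)).le]
  field_simp
  ring

theorem simplexPdf_eq_gaussianPDFReal_div (hy : 0 < y * (1 - y)) (v : ℝ≥0) :
    simplexPdf y μ v = gaussianPDFReal 0 v (simplexResid μ y) / √(y * (1 - y)) ^ 3 := by
  have hs : √((y * (1 - y)) ^ 3) = √(y * (1 - y)) ^ 3 := by
    rw [← sqrt_sq (by positivity : 0 ≤ √(y * (1 - y)) ^ 3), ← pow_mul, pow_mul',
      sq_sqrt hy.le]
  rw [simplexPdf, gaussianPDFReal, sub_zero, sq_simplexResid hy.le, rpow_neg (by positivity),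
    ← sqrt_eq_rpow, sqrt_mul (by positivity), hs, neg_div]
  ring

theorem hasDerivAt_simplexResid (hμ : μ ∈ Ioo 0 1) (hy : y ∈ Ioo 0 1) :
    HasDerivAt (simplexResid μ)
      (((1 - 2 * μ) * y + μ) / (2 * (μ * (1 - μ)) * √(y * (1 - y)) ^ 3)) y := by
  have := hμ.1.ne'
  have := (sub_pos.2 hμ.2).ne'
  refine (hasDerivAt_div_sqrt_mul_one_sub hy
    (((hasDerivAt_id' y).sub_const μ).div_const (μ * (1 - μ)))).congr_deriv ?_
  field_simp
  ring

theorem hasDerivAt_simplexResidConj (hμ : μ ∈ Ioo 0 1) (hy : y ∈ Ioo 0 1) :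
    HasDerivAt (simplexResidConj μ)
      ((y - μ) / (2 * (μ * (1 - μ)) * √(y * (1 - y)) ^ 3)) y := by
  have := hμ.1.ne'
  have := (sub_pos.2 hμ.2).ne'
  refine (hasDerivAt_div_sqrt_mul_one_sub hy ((((hasDerivAt_id' y).add_const μ).fun_sub
    ((hasDerivAt_id' y).const_mul (2 * μ))).div_const (μ * (1 - μ)))).congr_deriv ?_
  field_simp
  ring

theorem tendsto_simplexResid_nhdsGT_zero (hμ : μ ∈ Ioo 0 1) :
    Tendsto (simplexResid μ) (𝓝[>] 0) atBot := by
  have : 0 < 1 - μ := sub_pos.2 hμ.2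
  refine tendsto_div_sqrt_mul_one_sub_atBot (nhdsWithin_Ioo_eq_nhdsGT one_pos).ge (by ring)
    (by fun_prop) ?_
  exact div_neg_of_neg_of_pos (by linarith [hμ.1]) (mul_pos hμ.1 this)

theorem tendsto_simplexResid_nhdsLT_one (hμ : μ ∈ Ioo 0 1) :
    Tendsto (simplexResid μ) (𝓝[<] 1) atTop := by
  have : 0 < 1 - μ := sub_pos.2 hμ.2
  exact tendsto_div_sqrt_mul_one_sub_atTop (nhdsWithin_Ioo_eq_nhdsLT one_pos).ge (by ring)
    (by fun_prop) (div_pos this (mul_pos hμ.1 this))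

theorem tendsto_simplexResidConj_nhdsGT_zero (hμ : μ ∈ Ioo 0 1) :
    Tendsto (simplexResidConj μ) (𝓝[>] 0) atTop := by
  have : 0 < 1 - μ := sub_pos.2 hμ.2
  exact tendsto_div_sqrt_mul_one_sub_atTop (nhdsWithin_Ioo_eq_nhdsGT one_pos).ge (by ring)
    (by fun_prop) (div_pos (by linarith [hμ.1]) (mul_pos hμ.1 this))

theorem tendsto_simplexResidConj_nhdsLT_one (hμ : μ ∈ Ioo 0 1) :
    Tendsto (simplexResidConj μ) (𝓝[<] 1) atTop := by
  have : 0 < 1 - μ := sub_pos.2 hμ.2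
  exact tendsto_div_sqrt_mul_one_sub_atTop (nhdsWithin_Ioo_eq_nhdsLT one_pos).ge (by ring)
    (by fun_prop) (div_pos (by linarith [hμ.1]) (mul_pos hμ.1 this))

noncomputable def simplexDevPrimitive (μ : ℝ) (v : ℝ≥0) (y : ℝ) : ℝ :=
  (∫ t in 0..simplexResid μ y, t ^ 2 * gaussianPDFReal 0 v t) -
    (1 - 2 * μ) * exp (4 / (μ * (1 - μ)) / (2 * v)) *
      ∫ t in 0..simplexResidConj μ y, (t ^ 2 - 4 / (μ * (1 - μ))) * gaussianPDFReal 0 v t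

theorem hasDerivAt_simplexDevPrimitive (hμ : μ ∈ Ioo 0 1) (v : ℝ≥0) (hy : y ∈ Ioo 0 1) :
    HasDerivAt (simplexDevPrimitive μ v) (simplexDev y μ * simplexPdf y μ v) y := by
  have hpos : 0 < y * (1 - y) := mul_pos hy.1 (sub_pos.2 hy.2)
  have hM := ((by fun_prop : Continuous fun t => t ^ 2 * gaussianPDFReal 0 v t
    ).integral_hasStrictDerivAt 0 _).hasDerivAt.comp y (hasDerivAt_simplexResid hμ hy)
  have hH := ((by fun_prop : Continuous fun t =>
    (t ^ 2 - 4 / (μ * (1 - μ))) * gaussianPDFReal 0 v t).integral_hasStrictDerivAt 0 _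
    ).hasDerivAt.comp y (hasDerivAt_simplexResidConj hμ hy)
  refine (hM.sub (hH.const_mul _)).congr_deriv ?_
  have hw2 := sq_simplexResidConj hμ hy
  rw [hw2, add_sub_cancel_right, gaussianPDFReal_zero_eq_of_sq_eq v hw2, exp_neg,
    simplexPdf_eq_gaussianPDFReal_div hpos, ← sq_simplexResid hpos.le]
  have := hμ.1.ne'
  have := (sub_pos.2 hμ.2).ne'
  have := (sqrt_pos.2 hpos).ne'
  field_simp
  ring

theorem tendsto_simplexDevPrimitive_nhdsGT_zero (hμ : μ ∈ Ioo 0 1) (v : ℝ≥0) :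
    Tendsto (simplexDevPrimitive μ v) (𝓝[>] 0)
      (𝓝 (-(∫ t in Iic 0, t ^ 2 * gaussianPDFReal 0 v t) -
        (1 - 2 * μ) * exp (4 / (μ * (1 - μ)) / (2 * v)) *
          ∫ t in Ioi 0, (t ^ 2 - 4 / (μ * (1 - μ))) * gaussianPDFReal 0 v t)) := by
  refine Tendsto.sub ?_ (Tendsto.const_mul _ ?_)
  · refine (intervalIntegral_tendsto_integral_Iic 0
      (integrable_sq_mul_gaussianPDFReal v).integrableOn
      (tendsto_simplexResid_nhdsGT_zero hμ)).neg.congr fun y => ?_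
    exact (intervalIntegral.integral_symm _ _).symm
  · exact intervalIntegral_tendsto_integral_Ioi 0
      (integrable_sq_sub_mul_gaussianPDFReal v _).integrableOn
      (tendsto_simplexResidConj_nhdsGT_zero hμ)

theorem tendsto_simplexDevPrimitive_nhdsLT_one (hμ : μ ∈ Ioo 0 1) (v : ℝ≥0) :
    Tendsto (simplexDevPrimitive μ v) (𝓝[<] 1)
      (𝓝 ((∫ t in Ioi 0, t ^ 2 * gaussianPDFReal 0 v t) -
        (1 - 2 * μ) * exp (4 / (μ * (1 - μ)) / (2 * v)) *
          ∫ t in Ioi 0, (t ^ 2 - 4 / (μ * (1 - μ))) * gaussianPDFReal 0 v t)) :=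
  (intervalIntegral_tendsto_integral_Ioi 0 (integrable_sq_mul_gaussianPDFReal v).integrableOn
    (tendsto_simplexResid_nhdsLT_one hμ)).sub <| Tendsto.const_mul _ <|
      intervalIntegral_tendsto_integral_Ioi 0
        (integrable_sq_sub_mul_gaussianPDFReal v _).integrableOn
        (tendsto_simplexResidConj_nhdsLT_one hμ)

theorem simplexDev_mul_simplexPdf_nonneg (hy : y ∈ Ioo 0 1) (v : ℝ≥0) :
    0 ≤ simplexDev y μ * simplexPdf y μ v := by
  have hpos : 0 < y * (1 - y) := mul_pos hy.1 (sub_pos.2 hy.2)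
  rw [← sq_simplexResid hpos.le, simplexPdf_eq_gaussianPDFReal_div hpos]
  have := gaussianPDFReal_nonneg 0 v (simplexResid μ y)
  positivity

end simplex

/-- The expected unit deviance under the simplex distribution equals the
dispersion parameter σ². -/
theorem simplexPdf_expected_deviance (μ σ2 : ℝ) (hμ : μ ∈ Set.Ioo (0:ℝ) 1)
    (hσ2 : 0 < σ2) :
    ∫ y in (0:ℝ)..1, simplexDev y μ * simplexPdf y μ σ2 = σ2 := by
  lift σ2 to ℝ≥0 using hσ2.le
  have hM := integrable_sq_mul_gaussianPDFReal σ2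
  rw [integral_eq_sub_of_hasDerivAt_of_tendsto_of_nonneg zero_lt_one
      (fun y hy => hasDerivAt_simplexDevPrimitive hμ σ2 hy)
      (fun y hy => simplexDev_mul_simplexPdf_nonneg hy σ2)
      (tendsto_simplexDevPrimitive_nhdsGT_zero hμ σ2)
      (tendsto_simplexDevPrimitive_nhdsLT_one hμ σ2),
    ← integral_sq_mul_gaussianPDFReal (by exact_mod_cast hσ2.ne'),
    ← intervalIntegral.integral_Iic_add_Ioi hM.integrableOn hM.integrableOn]
  ring
end

section
/- For every μ ∈ (0,1) and every σ² > 0, the Fisher information for the dispersion parameter of the simplex distribution equals 1/(2(σ²)²): ∫₀¹ ( d(y;μ)/(2(σ²)²) − 1/(2σ²) )² · p(y;μ,σ²) dy = 1/(2(σ²)²). (Equivalently, ∫₀¹ d(y;μ)² · p(y;μ,σ²) dy = 3(σ²)².) -/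
open Real MeasureTheory Filter Set Topology

/-!
Let `r(y) = (y - μ) / (μ(1-μ)√(y(1-y)))` be the deviance residual, so that `d(y;μ) = r(y)²` and
`p(y;μ,σ²) = (2πσ²)^(-1/2) (y(1-y))^(-3/2) exp(-r(y)²/(2σ²))`. The map
`y ↦ y' = μ²(1-y) / (μ²(1-y) + (1-μ)²y)` is an involution of `(0,1)` with `r(y') = -r(y)`, and the
weight `(y(1-y))^(-3/2)` plus its pull-back under this involution is exactly `2 r'(y)`. Hence for
every even integrable `Ψ`, `∫₀¹ (y(1-y))^(-3/2) Ψ(r(y)) dy = ∫₀¹ r'(y) Ψ(r(y)) dy = ∫ Ψ`, i.e.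
`d(Y;μ)/σ²` is `χ²₁`-distributed. The Fisher information thus becomes the Gaussian integral
`E[(Z²/(2σ⁴) - 1/(2σ²))²] = 1/(2σ⁴)` for `Z ~ N(0,σ²)`, which follows from `E Z² = σ²` and
`E Z⁴ = 3σ⁴`.
-/

section GaussianMoments

variable {b : ℝ}

theorem integrable_pow_mul_exp_neg_mul_sq (hb : 0 < b) (n : ℕ) :
    Integrable fun x : ℝ => x ^ n * exp (-b * x ^ 2) := by
  simpa only [rpow_natCast] using
    integrable_rpow_mul_exp_neg_mul_sq hb (s := n) (by linarith [n.cast_nonneg (α := ℝ)])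

theorem integral_pow_add_two_mul_exp_neg_mul_sq (hb : 0 < b) (n : ℕ) :
    ∫ x : ℝ, x ^ (n + 2) * exp (-b * x ^ 2) =
      (n + 1) / (2 * b) * ∫ x : ℝ, x ^ n * exp (-b * x ^ 2) := by
  have hderiv (x : ℝ) : HasDerivAt (fun x => x ^ (n + 1) * exp (-b * x ^ 2))
      ((n + 1) * (x ^ n * exp (-b * x ^ 2)) - 2 * b * (x ^ (n + 2) * exp (-b * x ^ 2))) x := by
    refine ((hasDerivAt_pow (n + 1) x).fun_mul
      (((hasDerivAt_pow 2 x).const_mul (-b)).exp)).congr_deriv ?_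
    push_cast
    ring
  have hint := integrable_pow_mul_exp_neg_mul_sq hb
  have hzero := integral_eq_zero_of_hasDerivAt_of_integrable hderiv
    (((hint n).const_mul _).sub ((hint (n + 2)).const_mul _)) (hint (n + 1))
  rw [integral_sub ((hint n).const_mul _) ((hint (n + 2)).const_mul _), integral_const_mul,
    integral_const_mul] at hzero
  rw [div_mul_eq_mul_div, eq_div_iff (by positivity)]
  linarith

theorem integral_sq_mul_exp_neg_mul_sq (hb : 0 < b) :
    ∫ x : ℝ, x ^ 2 * exp (-b * x ^ 2) = √(π / b) / (2 * b) := by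
  rw [integral_pow_add_two_mul_exp_neg_mul_sq hb 0]
  simp only [pow_zero, one_mul, integral_gaussian]
  ring

theorem integral_pow_four_mul_exp_neg_mul_sq (hb : 0 < b) :
    ∫ x : ℝ, x ^ 4 * exp (-b * x ^ 2) = 3 * √(π / b) / (4 * b ^ 2) := by
  rw [integral_pow_add_two_mul_exp_neg_mul_sq hb 2, integral_sq_mul_exp_neg_mul_sq hb]
  field_simp
  norm_num

theorem integrable_sq_sub_mul_exp_neg_mul_sq (hb : 0 < b) (α β : ℝ) :
    Integrable fun x : ℝ => (α * x ^ 2 - β) ^ 2 * exp (-b * x ^ 2) := by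
  have hint := integrable_pow_mul_exp_neg_mul_sq hb
  refine ((((hint 4).const_mul (α ^ 2)).sub ((hint 2).const_mul (2 * α * β))).add
    ((hint 0).const_mul (β ^ 2))).congr (ae_of_all _ fun x => ?_)
  simp only [Pi.add_apply, Pi.sub_apply]
  ring

theorem integral_sq_sub_mul_exp_neg_mul_sq (hb : 0 < b) (α β : ℝ) :
    ∫ x : ℝ, (α * x ^ 2 - β) ^ 2 * exp (-b * x ^ 2) =
      √(π / b) * (3 * α ^ 2 / (4 * b ^ 2) - α * β / b + β ^ 2) := by
  have hint := integrable_pow_mul_exp_neg_mul_sq hb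
  calc ∫ x : ℝ, (α * x ^ 2 - β) ^ 2 * exp (-b * x ^ 2)
      = ∫ x : ℝ, α ^ 2 * (x ^ 4 * exp (-b * x ^ 2)) + -(2 * α * β) * (x ^ 2 * exp (-b * x ^ 2))
          + β ^ 2 * (x ^ 0 * exp (-b * x ^ 2)) :=
        integral_congr_ae (ae_of_all _ fun x => by ring)
    _ = _ := by
        rw [integral_add (((hint 4).const_mul _).fun_add ((hint 2).const_mul _))
            ((hint 0).const_mul _),
          integral_add ((hint 4).const_mul _) ((hint 2).const_mul _), integral_const_mul,
          integral_const_mul, integral_const_mul, integral_pow_four_mul_exp_neg_mul_sq hb,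
          integral_sq_mul_exp_neg_mul_sq hb]
        simp only [pow_zero, one_mul, integral_gaussian]
        field_simp
        ring

end GaussianMoments

theorem setIntegral_mul_eq_of_involution {s : Set ℝ} (hs : MeasurableSet s)
    {ψ ψ' w v Φ : ℝ → ℝ} (hψs : MapsTo ψ s s) (hψψ : LeftInvOn ψ ψ s)
    (hψ' : ∀ x ∈ s, HasDerivWithinAt ψ (ψ' x) s x) (hΦ : ∀ x ∈ s, Φ (ψ x) = Φ x)
    (hwv : ∀ x ∈ s, w x + |ψ' x| * w (ψ x) = 2 * v x)
    (hint : IntegrableOn (fun x => w x * Φ x) s) :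
    ∫ x in s, w x * Φ x = ∫ x in s, v x * Φ x := by
  have hψ_image : ψ '' s = s := (InvOn.bijOn ⟨hψψ, hψψ⟩ hψs hψs).image_eq
  have hreflect : EqOn (fun x => |ψ' x| • (w (ψ x) * Φ (ψ x)))
      (fun x => |ψ' x| * w (ψ x) * Φ x) s := fun x hx => by
    simp only [smul_eq_mul, hΦ x hx, mul_assoc]
  have hint' : IntegrableOn (fun x => |ψ' x| * w (ψ x) * Φ x) s := by
    rw [← hψ_image] at hint
    exact ((integrableOn_image_iff_integrableOn_abs_deriv_smul hs hψ' hψψ.injOn _).1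
      hint).congr_fun hreflect hs
  have hsubst : ∫ x in s, w x * Φ x = ∫ x in s, |ψ' x| * w (ψ x) * Φ x := by
    conv_lhs => rw [← hψ_image, integral_image_eq_integral_abs_deriv_smul hs hψ' hψψ.injOn]
    exact setIntegral_congr_fun hs hreflect
  have hsum : ∫ x in s, 2 * (v x * Φ x) =
      (∫ x in s, w x * Φ x) + ∫ x in s, |ψ' x| * w (ψ x) * Φ x := by
    rw [← integral_add hint hint']
    refine setIntegral_congr_fun hs fun x hx => ?_
    simp only [← mul_assoc, ← hwv x hx]
    ring
  rw [integral_const_mul] at hsum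
  linarith

theorem tendsto_inv_const_mul_sqrt_mul_one_sub {c a : ℝ} {l : Filter ℝ} (hc : 0 < c)
    (hl : l ≤ 𝓝 a) (ha : a * (1 - a) = 0) (hmem : Ioo 0 1 ∈ l) :
    Tendsto (fun y => (c * √(y * (1 - y)))⁻¹) l atTop := by
  refine tendsto_inv_nhdsGT_zero.comp (tendsto_nhdsWithin_iff.2 ⟨?_, ?_⟩)
  · have : Continuous fun y => c * √(y * (1 - y)) := by fun_prop
    simpa [ha] using (this.tendsto a).mono_left hl
  · filter_upwards [hmem] with y hy
    exact mul_pos hc (sqrt_pos.2 (mul_pos hy.1 (sub_pos.2 hy.2)))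

noncomputable def simplexDevResidual (μ y : ℝ) : ℝ :=
  (y - μ) / (μ * (1 - μ) * √(y * (1 - y)))

noncomputable def simplexDevResidualDeriv (μ y : ℝ) : ℝ :=
  (μ * (1 - y) + (1 - μ) * y) / (2 * (μ * (1 - μ)) * √(y * (1 - y)) ^ 3)

/-- The other solution `y'` of `d(y'; μ) = d(y; μ)`. -/
noncomputable def simplexReflect (μ y : ℝ) : ℝ :=
  μ ^ 2 * (1 - y) / (μ ^ 2 * (1 - y) + (1 - μ) ^ 2 * y)

theorem simplexDev_eq_sq {μ y : ℝ} (hy : y ∈ Icc 0 1) :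
    simplexDev y μ = simplexDevResidual μ y ^ 2 := by
  rw [simplexDev, simplexDevResidual, div_pow, mul_pow, mul_pow,
    sq_sqrt (mul_nonneg hy.1 (sub_nonneg.2 hy.2))]
  ring

theorem simplexPdf_eq {μ σ2 y : ℝ} (hσ2 : 0 ≤ σ2) (hy : y ∈ Icc 0 1) :
    simplexPdf y μ σ2 = (2 * π * σ2) ^ (-(1 / 2) : ℝ) *
      ((√(y * (1 - y)) ^ 3)⁻¹ * exp (-(2 * σ2)⁻¹ * simplexDevResidual μ y ^ 2)) := by
  have hyy : 0 ≤ y * (1 - y) := mul_nonneg hy.1 (sub_nonneg.2 hy.2)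
  rw [simplexPdf, mul_rpow (by positivity) (pow_nonneg hyy 3), ← rpow_pow_comm hyy,
    rpow_neg hyy, ← sqrt_eq_rpow, inv_pow, simplexDev_eq_sq hy, mul_assoc, neg_div,
    div_eq_inv_mul (simplexDevResidual μ y ^ 2), neg_mul]

section Residual

variable {μ : ℝ} (hμ : μ ∈ Ioo 0 1)
include hμ

theorem simplexDevResidualDeriv_pos {y : ℝ} (hy : y ∈ Ioo 0 1) :
    0 < simplexDevResidualDeriv μ y := by
  have := hμ.1; have := sub_pos.2 hμ.2; have := hy.1; have := sub_pos.2 hy.2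
  have := sqrt_pos.2 (mul_pos hy.1 (sub_pos.2 hy.2))
  unfold simplexDevResidualDeriv
  positivity

theorem hasDerivAt_simplexDevResidual {y : ℝ} (hy : y ∈ Ioo 0 1) :
    HasDerivAt (simplexDevResidual μ) (simplexDevResidualDeriv μ y) y := by
  have hyy : 0 < y * (1 - y) := mul_pos hy.1 (sub_pos.2 hy.2)
  have hsqrt : HasDerivAt (fun y => √(y * (1 - y))) ((1 - 2 * y) / (2 * √(y * (1 - y)))) y := by
    refine ((hasDerivAt_id y).fun_mul ((hasDerivAt_id y).const_sub 1)).sqrt hyy.ne'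
      |>.congr_deriv ?_
    simp only [id]
    ring
  have hs := sqrt_pos.2 hyy
  have := hμ.1; have := sub_pos.2 hμ.2
  have hden : μ * (1 - μ) * √(y * (1 - y)) ≠ 0 := by positivity
  refine (((hasDerivAt_id y).sub_const μ).div (hsqrt.const_mul (μ * (1 - μ))) hden).congr_deriv ?_
  have hs2 := sq_sqrt hyy.le
  rw [simplexDevResidualDeriv]
  generalize √(y * (1 - y)) = s at hs hs2 hden ⊢
  field_simp
  rw [hs2, id]
  ring

theorem strictMonoOn_simplexDevResidual : StrictMonoOn (simplexDevResidual μ) (Ioo 0 1) := by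
  refine strictMonoOn_of_hasDerivWithinAt_pos (convex_Ioo 0 1) (f' := simplexDevResidualDeriv μ)
    (fun y hy => (hasDerivAt_simplexDevResidual hμ hy).continuousAt.continuousWithinAt)
    (fun y hy => ?_) (fun y hy => ?_) <;> rw [interior_Ioo] at hy
  · exact (hasDerivAt_simplexDevResidual hμ hy).hasDerivWithinAt
  · exact simplexDevResidualDeriv_pos hμ hy

theorem tendsto_simplexDevResidual_nhdsGT_zero :
    Tendsto (simplexDevResidual μ) (𝓝[>] 0) atBot := by
  have hnum : Tendsto (fun y => y - μ) (𝓝[>] 0) (𝓝 (0 - μ)) :=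
    ((continuous_sub_right μ).tendsto 0).mono_left nhdsWithin_le_nhds
  exact hnum.neg_mul_atTop (by linarith [hμ.1]) (tendsto_inv_const_mul_sqrt_mul_one_sub
    (mul_pos hμ.1 (sub_pos.2 hμ.2)) nhdsWithin_le_nhds (by ring) (Ioo_mem_nhdsGT one_pos))

theorem tendsto_simplexDevResidual_nhdsLT_one :
    Tendsto (simplexDevResidual μ) (𝓝[<] 1) atTop := by
  have hnum : Tendsto (fun y => y - μ) (𝓝[<] 1) (𝓝 (1 - μ)) :=
    ((continuous_sub_right μ).tendsto 1).mono_left nhdsWithin_le_nhds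
  exact hnum.pos_mul_atTop (by linarith [hμ.2]) (tendsto_inv_const_mul_sqrt_mul_one_sub
    (mul_pos hμ.1 (sub_pos.2 hμ.2)) nhdsWithin_le_nhds (by ring) (Ioo_mem_nhdsLT one_pos))

theorem image_simplexDevResidual : simplexDevResidual μ '' Ioo 0 1 = univ :=
  univ_subset_iff.1 <| ContinuousOn.surjOn_of_tendsto (nonempty_Ioo.2 one_pos)
    (continuousOn_of_forall_continuousAt fun _ hy =>
      (hasDerivAt_simplexDevResidual hμ hy).continuousAt)
    ((tendsto_comp_coe_Ioo_atBot one_pos).2 (tendsto_simplexDevResidual_nhdsGT_zero hμ))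
    ((tendsto_comp_coe_Ioo_atTop one_pos).2 (tendsto_simplexDevResidual_nhdsLT_one hμ))

theorem integrableOn_simplexDevResidualDeriv_mul_comp {Ψ : ℝ → ℝ} (hΨ : Integrable Ψ) :
    IntegrableOn (fun y => simplexDevResidualDeriv μ y * Ψ (simplexDevResidual μ y))
      (Ioo 0 1) := by
  have h := integrableOn_image_iff_integrableOn_abs_deriv_smul measurableSet_Ioo
    (fun y hy => (hasDerivAt_simplexDevResidual hμ hy).hasDerivWithinAt)
    (strictMonoOn_simplexDevResidual hμ).injOn Ψ
  rw [image_simplexDevResidual hμ] at h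
  refine (h.1 hΨ.integrableOn).congr_fun (fun y hy => ?_) measurableSet_Ioo
  simp only [smul_eq_mul, abs_of_pos (simplexDevResidualDeriv_pos hμ hy)]

theorem setIntegral_simplexDevResidualDeriv_mul_comp (Ψ : ℝ → ℝ) :
    ∫ y in Ioo 0 1, simplexDevResidualDeriv μ y * Ψ (simplexDevResidual μ y) = ∫ t, Ψ t := by
  symm
  rw [← setIntegral_univ, ← image_simplexDevResidual hμ,
    integral_image_eq_integral_abs_deriv_smul measurableSet_Ioo
      (fun y hy => (hasDerivAt_simplexDevResidual hμ hy).hasDerivWithinAt)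
      (strictMonoOn_simplexDevResidual hμ).injOn]
  refine setIntegral_congr_fun measurableSet_Ioo fun y hy => ?_
  simp only [smul_eq_mul, abs_of_pos (simplexDevResidualDeriv_pos hμ hy)]

end Residual

section Reflect

variable {μ y : ℝ} (hμ : μ ∈ Ioo 0 1) (hy : y ∈ Ioo 0 1)
include hμ hy

theorem simplexReflect_denom_pos : 0 < μ ^ 2 * (1 - y) + (1 - μ) ^ 2 * y := by
  have := hμ.1; have := sub_pos.2 hμ.2; have := hy.1; have := sub_pos.2 hy.2
  positivity

theorem one_sub_simplexReflect :
    1 - simplexReflect μ y = (1 - μ) ^ 2 * y / (μ ^ 2 * (1 - y) + (1 - μ) ^ 2 * y) := by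
  rw [simplexReflect, one_sub_div (simplexReflect_denom_pos hμ hy).ne']
  ring

theorem simplexReflect_sub :
    simplexReflect μ y - μ = μ * (1 - μ) * (μ - y) / (μ ^ 2 * (1 - y) + (1 - μ) ^ 2 * y) := by
  rw [simplexReflect, div_sub' (simplexReflect_denom_pos hμ hy).ne']
  ring

theorem simplexReflect_mem : simplexReflect μ y ∈ Ioo 0 1 := by
  have := hμ.1; have := sub_pos.2 hμ.2; have := hy.1; have := sub_pos.2 hy.2
  refine ⟨by unfold simplexReflect; positivity, sub_pos.1 ?_⟩
  rw [one_sub_simplexReflect hμ hy]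
  positivity

theorem simplexReflect_simplexReflect : simplexReflect μ (simplexReflect μ y) = y := by
  have hD := simplexReflect_denom_pos hμ hy
  have := hμ.1; have := sub_pos.2 hμ.2
  rw [simplexReflect, one_sub_simplexReflect hμ hy, simplexReflect]
  field_simp
  ring

theorem sqrt_simplexReflect_mul_one_sub :
    √(simplexReflect μ y * (1 - simplexReflect μ y)) =
      μ * (1 - μ) * √(y * (1 - y)) / (μ ^ 2 * (1 - y) + (1 - μ) ^ 2 * y) := by
  have hD := simplexReflect_denom_pos hμ hy
  have := hμ.1; have := sub_pos.2 hμ.2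
  rw [← sqrt_sq (by positivity : 0 ≤ μ * (1 - μ) * √(y * (1 - y)) / _), div_pow, mul_pow,
    sq_sqrt (mul_pos hy.1 (sub_pos.2 hy.2)).le, one_sub_simplexReflect hμ hy, simplexReflect]
  congr 1
  field_simp

theorem simplexDevResidual_simplexReflect :
    simplexDevResidual μ (simplexReflect μ y) = -simplexDevResidual μ y := by
  have hD := simplexReflect_denom_pos hμ hy
  have := hμ.1; have := sub_pos.2 hμ.2
  have := sqrt_pos.2 (mul_pos hy.1 (sub_pos.2 hy.2))
  rw [simplexDevResidual, sqrt_simplexReflect_mul_one_sub hμ hy, simplexReflect_sub hμ hy,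
    simplexDevResidual]
  field_simp
  ring

theorem hasDerivAt_simplexReflect :
    HasDerivAt (simplexReflect μ)
      (-(μ * (1 - μ)) ^ 2 / (μ ^ 2 * (1 - y) + (1 - μ) ^ 2 * y) ^ 2) y := by
  have hnum := ((hasDerivAt_id y).const_sub 1).const_mul (μ ^ 2)
  have hden := hnum.fun_add ((hasDerivAt_id y).const_mul ((1 - μ) ^ 2))
  refine (hnum.fun_div hden (simplexReflect_denom_pos hμ hy).ne').congr_deriv ?_
  simp only [id]
  ring

theorem inv_sqrt_cube_add_simplexReflect :
    (√(y * (1 - y)) ^ 3)⁻¹ + |-(μ * (1 - μ)) ^ 2 / (μ ^ 2 * (1 - y) + (1 - μ) ^ 2 * y) ^ 2| *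
      (√(simplexReflect μ y * (1 - simplexReflect μ y)) ^ 3)⁻¹ =
      2 * simplexDevResidualDeriv μ y := by
  have hD := simplexReflect_denom_pos hμ hy
  have := hμ.1; have := sub_pos.2 hμ.2
  have := sqrt_pos.2 (mul_pos hy.1 (sub_pos.2 hy.2))
  rw [sqrt_simplexReflect_mul_one_sub hμ hy, simplexDevResidualDeriv, abs_div, abs_neg,
    abs_of_pos (by positivity : 0 < (μ * (1 - μ)) ^ 2), abs_of_pos (pow_pos hD 2)]
  field_simp
  ring

theorem inv_sqrt_cube_le_two_mul_simplexDevResidualDeriv :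
    (√(y * (1 - y)) ^ 3)⁻¹ ≤ 2 * simplexDevResidualDeriv μ y := by
  rw [← inv_sqrt_cube_add_simplexReflect hμ hy]
  exact le_add_of_nonneg_right (by positivity)

end Reflect

section Transfer

variable {μ : ℝ} (hμ : μ ∈ Ioo 0 1) {Ψ : ℝ → ℝ} (hΨ : Integrable Ψ)
include hμ hΨ

theorem integrableOn_inv_sqrt_cube_mul_comp_simplexDevResidual :
    IntegrableOn (fun y => (√(y * (1 - y)) ^ 3)⁻¹ * Ψ (simplexDevResidual μ y)) (Ioo 0 1) := by
  have hint := integrableOn_simplexDevResidualDeriv_mul_comp hμ hΨ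
  have hmeas : Measurable fun y => (√(y * (1 - y)) ^ 3)⁻¹ / simplexDevResidualDeriv μ y := by
    unfold simplexDevResidualDeriv
    fun_prop
  refine Integrable.mono' (hint.norm.const_mul 2) ?_ ?_
  · refine (hmeas.aestronglyMeasurable.mul hint.aestronglyMeasurable).congr ?_
    filter_upwards [ae_restrict_mem measurableSet_Ioo] with y hy
    simp only [Pi.mul_apply]
    field_simp [(simplexDevResidualDeriv_pos hμ hy).ne']
  · filter_upwards [ae_restrict_mem measurableSet_Ioo] with y hy
    rw [norm_mul, norm_mul, ← mul_assoc, norm_of_nonneg (by positivity),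
      norm_of_nonneg (simplexDevResidualDeriv_pos hμ hy).le]
    exact mul_le_mul_of_nonneg_right
      (inv_sqrt_cube_le_two_mul_simplexDevResidualDeriv hμ hy) (norm_nonneg _)

theorem setIntegral_inv_sqrt_cube_mul_comp_simplexDevResidual (heven : Ψ.Even) :
    ∫ y in Ioo 0 1, (√(y * (1 - y)) ^ 3)⁻¹ * Ψ (simplexDevResidual μ y) = ∫ t, Ψ t := by
  rw [← setIntegral_simplexDevResidualDeriv_mul_comp hμ Ψ]
  exact setIntegral_mul_eq_of_involution measurableSet_Ioo
    (fun _ hy => simplexReflect_mem hμ hy) (fun _ hy => simplexReflect_simplexReflect hμ hy)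
    (fun _ hy => (hasDerivAt_simplexReflect hμ hy).hasDerivWithinAt)
    (fun _ hy => by rw [simplexDevResidual_simplexReflect hμ hy, heven])
    (fun _ hy => inv_sqrt_cube_add_simplexReflect hμ hy)
    (integrableOn_inv_sqrt_cube_mul_comp_simplexDevResidual hμ hΨ)

end Transfer

/-- The Fisher information for the dispersion parameter of the simplex
distribution equals 1/(2(σ²)²). -/
theorem simplexPdf_fisher_info_dispersion (μ σ2 : ℝ)
    (hμ : μ ∈ Set.Ioo (0:ℝ) 1) (hσ2 : 0 < σ2) :
    ∫ y in (0:ℝ)..1,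
        (simplexDev y μ / (2 * σ2^2) - 1 / (2 * σ2))^2 * simplexPdf y μ σ2 =
      1 / (2 * σ2^2) := by
  set Ψ : ℝ → ℝ := fun t =>
    ((2 * σ2 ^ 2)⁻¹ * t ^ 2 - (2 * σ2)⁻¹) ^ 2 * exp (-(2 * σ2)⁻¹ * t ^ 2)
  have hb : 0 < (2 * σ2)⁻¹ := by positivity
  have hΨ_even : Ψ.Even := fun t => by simp only [Ψ, neg_sq]
  have hintegrand : EqOn
      (fun y => (simplexDev y μ / (2 * σ2 ^ 2) - 1 / (2 * σ2)) ^ 2 * simplexPdf y μ σ2)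
      (fun y => (2 * π * σ2) ^ (-(1 / 2) : ℝ) *
        ((√(y * (1 - y)) ^ 3)⁻¹ * Ψ (simplexDevResidual μ y))) (Ioo 0 1) := fun y hy => by
    simp only [Ψ, simplexPdf_eq hσ2.le (Ioo_subset_Icc_self hy),
      simplexDev_eq_sq (Ioo_subset_Icc_self hy)]
    ring
  rw [intervalIntegral.integral_of_le zero_le_one, integral_Ioc_eq_integral_Ioo,
    setIntegral_congr_fun measurableSet_Ioo hintegrand, integral_const_mul,
    setIntegral_inv_sqrt_cube_mul_comp_simplexDevResidual hμ
      (integrable_sq_sub_mul_exp_neg_mul_sq hb _ _) hΨ_even,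
    integral_sq_sub_mul_exp_neg_mul_sq hb, div_inv_eq_mul, rpow_neg (by positivity),
    ← sqrt_eq_rpow]
  have : 0 < √(π * (2 * σ2)) := sqrt_pos.2 (by positivity)
  field_simp
  ring
end
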